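/- Let f : ℝ^d → ℝ be (ρ, K₀, K_ρ)-smooth with K₀, K_ρ > 0 and f* = inf f > −∞. Fix x ∈ ℝ^d, let Δ = f(x) − f*, L(Δ) = 2K₀ + K_ρ(2Δ)^ρ and r(Δ) = min{C₁Δ^{−(ρ−1)/2}, C₂}. Then for any x₁, x₂ ∈ ℝ^d satisfying ‖x₁ − x‖ ≤ r(Δ) and ‖x₂ − x‖ ≤ r(Δ), one has ‖∇f(x₁) − ∇f(x₂)‖ ≤ L(Δ)‖x₁ − x₂‖ and f(x₂) ≤ f(x₁) + ⟨∇f(x₁), x₂ − x₁⟩ + (L(Δ)/2)‖x₂ − x₁‖². -/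

import Mathlib

/-! The smoothness bound gives the uniform Hessian bound `L` on the sublevel set
`{f < f* + G}`, where `G = ((2Δ)^ρ + K₀/K_ρ)^{1/ρ} > 2Δ`. A continuity argument along a segment
shows that `f` stays in this sublevel set as long as its quadratic upper model (with constant `L`)
does. A gradient step `-∇f(x)/L` then yields `‖∇f(x)‖² ≤ 2LΔ`, and the constants `C₁, C₂` are
chosen so that `L r² ≤ G/9`; hence on the ball of radius `r` around `x` the model stays below
`f* + Δ + G/3 + G/18 < f* + G`. The whole ball thus lies in the sublevel set, and both
conclusions follow from the Hessian bound on this convex set. -/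

open Real Set Metric
open scoped RealInnerProductSpace

noncomputable section

theorem Continuous.forall_mem_Icc_lt_of_bootstrap {φ : ℝ → ℝ} {a b c c' : ℝ}
    (hφ : Continuous φ) (hc' : c' < c) (ha : φ a < c)
    (H : ∀ u ∈ Icc a b, (∀ s ∈ Icc a u, φ s < c) → φ u ≤ c') :
    ∀ t ∈ Icc a b, φ t < c := by
  by_contra! hcross
  set B := Icc a b ∩ {t | c ≤ φ t}
  have hB : IsClosed B := isClosed_Icc.inter (isClosed_le continuous_const hφ)
  have hBne : B.Nonempty := hcross
  have hBbdd : BddBelow B := ⟨a, fun t ht => ht.1.1⟩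
  set t₀ := sInf B
  obtain ⟨⟨hat₀, ht₀b⟩, hct₀⟩ : t₀ ∈ B := hB.csInf_mem hBne hBbdd
  change c ≤ φ t₀ at hct₀
  have below : ∀ s ∈ Ico a t₀, φ s < c := fun s hs => by
    by_contra! hcs
    exact (csInf_le hBbdd ⟨⟨hs.1, hs.2.le.trans ht₀b⟩, hcs⟩).not_gt hs.2
  have hat₀ : a < t₀ := hat₀.lt_of_ne fun h => (h ▸ ha).not_ge hct₀
  have hle : Icc a t₀ ⊆ {s | φ s ≤ c'} := by
    rw [← closure_Ico hat₀.ne]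
    refine closure_minimal (fun s hs => H s ⟨hs.1, hs.2.le.trans ht₀b⟩ ?_) ?_
    · exact fun s' hs' => below s' ⟨hs'.1, hs'.2.trans_lt hs.2⟩
    · exact isClosed_le hφ continuous_const
  linarith [show φ t₀ ≤ c' from hle ⟨hat₀.le, le_rfl⟩]

variable {E : Type*} [NormedAddCommGroup E] [InnerProductSpace ℝ E] [CompleteSpace E]
  {f : E → ℝ} {s : Set E} {x y v : E} {L : ℝ}

theorem DifferentiableAt.hasDerivAt_comp_add_smul {t : ℝ}
    (hf : DifferentiableAt ℝ f (x + t • v)) :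
    HasDerivAt (fun t : ℝ => f (x + t • v)) ⟪gradient f (x + t • v), v⟫ t := by
  rw [inner_gradient_left]
  refine hf.hasFDerivAt.comp_hasDerivAt t ?_
  simpa using ((hasDerivAt_id t).smul_const v).const_add x

theorem Convex.le_add_inner_add_of_norm_gradient_sub_le (hs : Convex ℝ s)
    (hf : ∀ y ∈ s, DifferentiableAt ℝ f y)
    (hlip : ∀ y ∈ s, ‖gradient f y - gradient f x‖ ≤ L * ‖y - x‖)
    (hx : x ∈ s) (hy : y ∈ s) :
    f y ≤ f x + ⟪gradient f x, y - x⟫ + L / 2 * ‖y - x‖ ^ 2 := by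
  set v := y - x
  have hseg : ∀ t ∈ Icc (0 : ℝ) 1, x + t • v ∈ s := fun t ht => hs.add_smul_sub_mem hx hy ht
  set ψ : ℝ → ℝ := fun t => f (x + t • v) - t * ⟪gradient f x, v⟫ - L / 2 * t ^ 2 * ‖v‖ ^ 2
  have hψ : ∀ t ∈ Icc (0 : ℝ) 1,
      HasDerivAt ψ (⟪gradient f (x + t • v) - gradient f x, v⟫ - L * t * ‖v‖ ^ 2) t :=
      fun t ht => by
    refine (((hf _ (hseg t ht)).hasDerivAt_comp_add_smul.sub
      ((hasDerivAt_id t).mul_const ⟪gradient f x, v⟫)).sub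
      (((hasDerivAt_pow 2 t).const_mul (L / 2)).mul_const (‖v‖ ^ 2))).congr_deriv ?_
    rw [inner_sub_left]
    push_cast
    ring
  have hanti : AntitoneOn ψ (Icc 0 1) := by
    refine antitoneOn_of_hasDerivWithinAt_nonpos (convex_Icc 0 1)
      (fun t ht => (hψ t ht).continuousAt.continuousWithinAt)
      (fun t ht => (hψ t (interior_subset ht)).hasDerivWithinAt) fun t ht => ?_
    rw [interior_Icc] at ht
    have hlipt := hlip _ (hseg t (Ioo_subset_Icc_self ht))
    rw [add_sub_cancel_left, norm_smul, Real.norm_of_nonneg ht.1.le] at hlipt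
    have := real_inner_le_norm (gradient f (x + t • v) - gradient f x) v
    nlinarith [norm_nonneg v]
  have := hanti (left_mem_Icc.2 zero_le_one) (right_mem_Icc.2 zero_le_one) zero_le_one
  simp only [ψ, v, zero_smul, add_zero, one_smul, add_sub_cancel] at this
  linarith

theorem ContDiff.differentiable_gradient (hf : ContDiff ℝ 2 f) : Differentiable ℝ (gradient f) :=
  ((InnerProductSpace.toDual ℝ E).symm.contDiff.comp
    (hf.fderiv_right (m := 1) (by norm_num))).differentiable (by norm_num)

theorem Convex.norm_gradient_sub_le_of_norm_fderiv_gradient_le (hs : Convex ℝ s)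
    (hf : ContDiff ℝ 2 f) (hH : ∀ y ∈ s, ‖fderiv ℝ (gradient f) y‖ ≤ L) (hx : x ∈ s) (hy : y ∈ s) :
    ‖gradient f y - gradient f x‖ ≤ L * ‖y - x‖ :=
  hs.norm_image_sub_le_of_norm_fderiv_le (fun z _ => hf.differentiable_gradient z) hH hx hy

theorem Convex.le_add_inner_add_of_norm_fderiv_gradient_le (hs : Convex ℝ s)
    (hf : ContDiff ℝ 2 f) (hH : ∀ y ∈ s, ‖fderiv ℝ (gradient f) y‖ ≤ L) (hx : x ∈ s) (hy : y ∈ s) :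
    f y ≤ f x + ⟪gradient f x, y - x⟫ + L / 2 * ‖y - x‖ ^ 2 :=
  hs.le_add_inner_add_of_norm_gradient_sub_le
    (fun _ _ => (hf.differentiable two_ne_zero).differentiableAt)
    (fun _ hz => hs.norm_gradient_sub_le_of_norm_fderiv_gradient_le hf hH hx hz) hx hy

theorem segment_subset_setOf_lt_of_model_le (hf : ContDiff ℝ 2 f) {c c' : ℝ}
    (hH : ∀ w, f w < c → ‖fderiv ℝ (gradient f) w‖ ≤ L) (hc' : c' < c)
    (hq : ∀ t ∈ Icc (0 : ℝ) 1, f x + t * ⟪gradient f x, v⟫ + L / 2 * t ^ 2 * ‖v‖ ^ 2 ≤ c') :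
    segment ℝ x (x + v) ⊆ {w | f w < c} := by
  have key : ∀ t ∈ Icc (0 : ℝ) 1, f (x + t • v) < c := by
    refine (hf.continuous.comp (by fun_prop)).forall_mem_Icc_lt_of_bootstrap
      (φ := fun t : ℝ => f (x + t • v)) hc' ?_ fun u hu hlt => ?_
    · simpa using (hq 0 ⟨le_rfl, zero_le_one⟩).trans_lt hc'
    have hseg : segment ℝ x (x + u • v) ⊆ {w | f w < c} := by
      rw [segment_eq_image']
      rintro _ ⟨θ, hθ, rfl⟩
      simpa [smul_smul] using
        hlt (θ * u) ⟨mul_nonneg hθ.1 hu.1, mul_le_of_le_one_left hu.1 hθ.2⟩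
    have := (convex_segment x (x + u • v)).le_add_inner_add_of_norm_fderiv_gradient_le hf
      (fun w hw => hH w (hseg hw)) (left_mem_segment ℝ _ _) (right_mem_segment ℝ _ _)
    simp only [add_sub_cancel_left, inner_smul_right, norm_smul, Real.norm_of_nonneg hu.1]
      at this
    linarith [hq u hu]
  rw [segment_eq_image']
  rintro _ ⟨t, ht, rfl⟩
  simpa using key t ht

theorem sq_norm_gradient_le (hf : ContDiff ℝ 2 f) {m c : ℝ} (hm : ∀ w, m ≤ f w) (hL : 0 < L)
    (hH : ∀ w, f w < c → ‖fderiv ℝ (gradient f) w‖ ≤ L) (hx : f x < c) :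
    ‖gradient f x‖ ^ 2 ≤ 2 * L * (f x - m) := by
  set g := gradient f x
  set v := -(1 / L) • g
  have hgv : ⟪g, v⟫ = -(‖g‖ ^ 2 / L) := by
    rw [inner_smul_right, real_inner_self_eq_norm_sq]; ring
  have hv : ∀ t : ℝ, L / 2 * t ^ 2 * ‖v‖ ^ 2 = t ^ 2 / 2 * (‖g‖ ^ 2 / L) := fun t => by
    rw [norm_smul, norm_neg, Real.norm_of_nonneg (by positivity)]; field_simp
  have hseg := segment_subset_setOf_lt_of_model_le hf hH hx fun t ht => by
    have : 0 ≤ ‖g‖ ^ 2 / L * t * (2 - t) :=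
      mul_nonneg (mul_nonneg (by positivity) ht.1) (by linarith [ht.2])
    rw [hgv, hv]
    nlinarith
  have hdesc := (convex_segment x (x + v)).le_add_inner_add_of_norm_fderiv_gradient_le hf
    (fun w hw => hH w (hseg hw)) (left_mem_segment ℝ _ _) (right_mem_segment ℝ _ _)
  have hv1 := hv 1
  rw [one_pow, mul_one] at hv1
  rw [add_sub_cancel_left, hgv, hv1] at hdesc
  have hdec : ‖g‖ ^ 2 / L / 2 ≤ f x - m := by linarith [hm (x + v)]
  calc ‖g‖ ^ 2 = 2 * L * (‖g‖ ^ 2 / L / 2) := by field_simp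
    _ ≤ 2 * L * (f x - m) := by gcongr

theorem closedBall_subset_setOf_lt (hf : ContDiff ℝ 2 f) (hL : 0 ≤ L) {c r : ℝ}
    (hH : ∀ w, f w < c → ‖fderiv ℝ (gradient f) w‖ ≤ L)
    (hr : f x + ‖gradient f x‖ * r + L / 2 * r ^ 2 < c) :
    closedBall x r ⊆ {w | f w < c} := by
  intro w hw
  rw [mem_closedBall_iff_norm] at hw
  have hq : ∀ t ∈ Icc (0 : ℝ) 1, f x + t * ⟪gradient f x, w - x⟫ + L / 2 * t ^ 2 * ‖w - x‖ ^ 2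
      ≤ f x + ‖gradient f x‖ * r + L / 2 * r ^ 2 := fun t ht => by
    have hinner : t * ⟪gradient f x, w - x⟫ ≤ ‖gradient f x‖ * r :=
      calc t * ⟪gradient f x, w - x⟫ ≤ t * (‖gradient f x‖ * ‖w - x‖) :=
            mul_le_mul_of_nonneg_left (real_inner_le_norm _ _) ht.1
        _ ≤ ‖gradient f x‖ * ‖w - x‖ := mul_le_of_le_one_left (by positivity) ht.2
        _ ≤ ‖gradient f x‖ * r := by gcongr
    have hsq : t ^ 2 * ‖w - x‖ ^ 2 ≤ r ^ 2 := by
      rw [← mul_pow]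
      exact pow_le_pow_left₀ (mul_nonneg ht.1 (norm_nonneg _))
        ((mul_le_of_le_one_left (norm_nonneg _) ht.2).trans hw) 2
    nlinarith
  simpa using segment_subset_setOf_lt_of_model_le hf hH hr hq (right_mem_segment ℝ _ _)

def C₁ (ρ Kρ : ℝ) : ℝ := 1 / ((2 + √2) * √(3 ^ ρ * Kρ))

def C₂ (ρ K0 Kρ : ℝ) : ℝ :=
  (1 / (2 * √3 + √6)) * K0 ^ (1 / (2 * ρ) - 1 / 2) / Kρ ^ (1 / (2 * ρ))

theorem sq_C₁ {ρ Kρ : ℝ} (hKρ : 0 < Kρ) :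
    C₁ ρ Kρ ^ 2 = 1 / (2 * (3 + 2 * √2) * (3 ^ ρ * Kρ)) := by
  have h2 : √2 ^ 2 = 2 := Real.sq_sqrt zero_le_two
  rw [C₁, div_pow, mul_pow, Real.sq_sqrt (by positivity),
    show (2 + √2) ^ 2 = 2 * (3 + 2 * √2) by linear_combination h2, one_pow]

theorem two_mul_mul_sq_C₂ {ρ K0 Kρ : ℝ} (hK0 : 0 < K0) (hKρ : 0 < Kρ) :
    2 * K0 * C₂ ρ K0 Kρ ^ 2 = (K0 / Kρ) ^ ρ⁻¹ / (3 * (3 + 2 * √2)) := by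
  have h2 : √2 ^ 2 = 2 := Real.sq_sqrt zero_le_two
  have h3 : √3 ^ 2 = 3 := Real.sq_sqrt zero_le_three
  have h6 : √6 = √3 * √2 := by
    rw [← Real.sqrt_mul zero_le_three]; norm_num
  have hden : (2 * √3 + √6) ^ 2 = 6 * (3 + 2 * √2) := by
    rw [h6]; linear_combination (4 + 4 * √2 + √2 ^ 2) * h3 + 3 * h2
  have hK0pow : K0 * (K0 ^ (1 / (2 * ρ) - 1 / 2)) ^ 2 = K0 ^ ρ⁻¹ := by
    rw [← Real.rpow_natCast, ← Real.rpow_mul hK0.le, mul_comm, ← Real.rpow_add_one hK0.ne']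
    ring_nf
  have hKρpow : (Kρ ^ (1 / (2 * ρ))) ^ 2 = Kρ ^ ρ⁻¹ := by
    rw [← Real.rpow_natCast, ← Real.rpow_mul hKρ.le]; ring_nf
  calc 2 * K0 * C₂ ρ K0 Kρ ^ 2
      = 2 * (K0 * (K0 ^ (1 / (2 * ρ) - 1 / 2)) ^ 2)
          / ((2 * √3 + √6) ^ 2 * (Kρ ^ (1 / (2 * ρ))) ^ 2) := by rw [C₂]; field_simp
    _ = 2 * K0 ^ ρ⁻¹ / (6 * (3 + 2 * √2) * Kρ ^ ρ⁻¹) := by rw [hK0pow, hden, hKρpow]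
    _ = (K0 / Kρ) ^ ρ⁻¹ / (3 * (3 + 2 * √2)) := by
      rw [Real.div_rpow hK0.le hKρ.le]; field_simp; ring

theorem sq_mul_two_mul_le_of_le_C₂ {ρ K0 Kρ r : ℝ} (hK0 : 0 < K0) (hKρ : 0 < Kρ) (hr0 : 0 ≤ r)
    (hr : r ≤ C₂ ρ K0 Kρ) : r ^ 2 * (2 * K0) ≤ (K0 / Kρ) ^ ρ⁻¹ / (3 * (3 + 2 * √2)) := by
  rw [← two_mul_mul_sq_C₂ hK0 hKρ, mul_comm]
  gcongr

theorem sq_mul_rpow_le_of_le_C₁ {ρ Kρ Δ r : ℝ} (hρ : 0 < ρ) (hKρ : 0 < Kρ) (hΔ : 0 ≤ Δ)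
    (hr0 : 0 ≤ r) (hr : r ≤ C₁ ρ Kρ * Δ ^ (-(ρ - 1) / 2)) :
    r ^ 2 * (Kρ * (2 * Δ) ^ ρ) ≤ Δ / (2 * (3 + 2 * √2)) := by
  rcases hΔ.eq_or_lt with rfl | hΔ
  · simp [Real.zero_rpow hρ.ne']
  have hr2 : r ^ 2 ≤ C₁ ρ Kρ ^ 2 * Δ ^ (1 - ρ) :=
    calc r ^ 2 ≤ (C₁ ρ Kρ * Δ ^ (-(ρ - 1) / 2)) ^ 2 := pow_le_pow_left₀ hr0 hr 2
      _ = C₁ ρ Kρ ^ 2 * Δ ^ (1 - ρ) := by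
        rw [mul_pow, ← Real.rpow_mul_natCast hΔ.le]; push_cast; ring_nf
  have hΔρ : Δ ^ (1 - ρ) * Δ ^ ρ = Δ := by rw [← Real.rpow_add hΔ]; simp
  have h23 : (2 / 3 : ℝ) ^ ρ ≤ 1 := Real.rpow_le_one (by norm_num) (by norm_num) hρ.le
  calc r ^ 2 * (Kρ * (2 * Δ) ^ ρ) ≤ C₁ ρ Kρ ^ 2 * Δ ^ (1 - ρ) * (Kρ * (2 * Δ) ^ ρ) := by gcongr
    _ = (2 / 3) ^ ρ * Δ / (2 * (3 + 2 * √2)) := by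
      rw [sq_C₁ hKρ, Real.mul_rpow zero_le_two hΔ.le, Real.div_rpow zero_le_two zero_le_three]
      field_simp
      linear_combination hΔρ
    _ ≤ Δ / (2 * (3 + 2 * √2)) := by gcongr; exact mul_le_of_le_one_left hΔ.le h23

theorem sq_mul_le_div_nine {ρ K0 Kρ Δ r G : ℝ} (hρ : 0 < ρ) (hK0 : 0 < K0) (hKρ : 0 < Kρ)
    (hΔ : 0 ≤ Δ) (hr0 : 0 ≤ r) (hr : r ≤ min (C₁ ρ Kρ * Δ ^ (-(ρ - 1) / 2)) (C₂ ρ K0 Kρ))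
    (hΔG : 2 * Δ < G) (hKG : (K0 / Kρ) ^ ρ⁻¹ ≤ G) :
    r ^ 2 * (2 * K0 + Kρ * (2 * Δ) ^ ρ) ≤ G / 9 := by
  have hA := sq_mul_rpow_le_of_le_C₁ hρ hKρ hΔ hr0 (hr.trans (min_le_left _ _))
  have hB := sq_mul_two_mul_le_of_le_C₂ hK0 hKρ hr0 (hr.trans (min_le_right _ _))
  have hsqrt2 : 21 / 4 ≤ 3 + 2 * √2 := by
    nlinarith [Real.sqrt_nonneg 2, Real.sq_sqrt (zero_le_two : (0 : ℝ) ≤ 2)]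
  have hG : 0 < G := by linarith [Real.rpow_nonneg (div_pos hK0 hKρ).le ρ⁻¹]
  calc r ^ 2 * (2 * K0 + Kρ * (2 * Δ) ^ ρ)
      ≤ (K0 / Kρ) ^ ρ⁻¹ / (3 * (3 + 2 * √2)) + Δ / (2 * (3 + 2 * √2)) := by
        rw [mul_add]; exact add_le_add hB hA
    _ ≤ G / (3 * (3 + 2 * √2)) + G / 2 / (2 * (3 + 2 * √2)) := by gcongr; linarith
    _ = 7 / 12 * G / (3 + 2 * √2) := by field_simp; ring
    _ ≤ 7 / 12 * G / (21 / 4) := by gcongr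
    _ = G / 9 := by ring

theorem exists_two_mul_lt_forall_add_mul_rpow_le {ρ K0 Kρ Δ : ℝ} (hρ : 0 < ρ) (hK0 : 0 < K0)
    (hKρ : 0 < Kρ) (hΔ : 0 ≤ Δ) :
    ∃ G, 2 * Δ < G ∧ (K0 / Kρ) ^ ρ⁻¹ ≤ G ∧
      ∀ y, 0 ≤ y → y ≤ G → K0 + Kρ * y ^ ρ ≤ 2 * K0 + Kρ * (2 * Δ) ^ ρ := by
  have hΔρ : 0 ≤ (2 * Δ) ^ ρ := by positivity
  have hKK : 0 < K0 / Kρ := div_pos hK0 hKρ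
  refine ⟨((2 * Δ) ^ ρ + K0 / Kρ) ^ ρ⁻¹, ?_, ?_, fun y hy hyG => ?_⟩
  · calc 2 * Δ = ((2 * Δ) ^ ρ) ^ ρ⁻¹ := (Real.rpow_rpow_inv (by positivity) hρ.ne').symm
      _ < _ := by gcongr; linarith
  · gcongr; linarith
  · have hyρ : y ^ ρ ≤ (2 * Δ) ^ ρ + K0 / Kρ := by
      calc y ^ ρ ≤ (((2 * Δ) ^ ρ + K0 / Kρ) ^ ρ⁻¹) ^ ρ := by gcongr
        _ = _ := Real.rpow_inv_rpow (by positivity) hρ.ne'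
    calc K0 + Kρ * y ^ ρ ≤ K0 + Kρ * ((2 * Δ) ^ ρ + K0 / Kρ) := by gcongr
      _ = 2 * K0 + Kρ * (2 * Δ) ^ ρ := by field_simp; ring

/-- Two-point local descent lemma. If `f` is `(ρ, K₀, K_ρ)`-smooth with
`K₀, K_ρ > 0` and `f* = inf f > −∞`, then with `Δ = f(x) − f*`, `L(Δ) = 2K₀ + K_ρ(2Δ)^ρ`
and `r(Δ) = min{C₁Δ^{−(ρ−1)/2}, C₂}`, for any `x₁, x₂` with `‖x₁ − x‖ ≤ r(Δ)` and
`‖x₂ − x‖ ≤ r(Δ)` one has `‖∇f(x₁) − ∇f(x₂)‖ ≤ L(Δ)‖x₁ − x₂‖` and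
`f(x₂) ≤ f(x₁) + ⟨∇f(x₁), x₂ − x₁⟩ + L(Δ)/2 ‖x₂ − x₁‖²`. -/
theorem statement6 (d : ℕ) (f : EuclideanSpace ℝ (Fin d) → ℝ)
    (hf : ContDiff ℝ 2 f)
    (ρ K0 Kρ : ℝ) (hρ : 0 < ρ) (hK0 : 0 < K0) (hKρ : 0 < Kρ)
    (fstar : ℝ) (hglb : IsGLB (Set.range f) fstar)
    (hsmooth : ∀ w, ‖fderiv ℝ (gradient f) w‖ ≤ K0 + Kρ * (f w - fstar) ^ ρ)
    (C1 C2 : ℝ)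
    (hC1 : C1 = 1 / ((2 + Real.sqrt 2) * Real.sqrt (3 ^ ρ * Kρ)))
    (hC2 : C2 = (1 / (2 * Real.sqrt 3 + Real.sqrt 6)) *
      K0 ^ (1 / (2 * ρ) - 1 / 2) / Kρ ^ (1 / (2 * ρ)))
    (x : EuclideanSpace ℝ (Fin d))
    (Δ L r : ℝ)
    (hΔ : Δ = f x - fstar)
    (hL : L = 2 * K0 + Kρ * (2 * Δ) ^ ρ)
    (hr : r = min (C1 * Δ ^ (-(ρ - 1) / 2)) C2) :
    ∀ x1 x2 : EuclideanSpace ℝ (Fin d), ‖x1 - x‖ ≤ r → ‖x2 - x‖ ≤ r →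
      ‖gradient f x1 - gradient f x2‖ ≤ L * ‖x1 - x2‖ ∧
      f x2 ≤ f x1 + ⟪gradient f x1, x2 - x1⟫ + L / 2 * ‖x2 - x1‖ ^ 2 := by
  intro x1 x2 h1 h2
  have hlb : ∀ w, fstar ≤ f w := fun w => hglb.1 ⟨w, rfl⟩
  have hΔ0 : 0 ≤ Δ := hΔ ▸ sub_nonneg.2 (hlb x)
  have hr0 : 0 ≤ r := (norm_nonneg _).trans h1
  obtain ⟨G, hΔG, hKG, hbound⟩ := exists_two_mul_lt_forall_add_mul_rpow_le hρ hK0 hKρ hΔ0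
  have hG : 0 < G := by linarith
  have hLpos : 0 < L := by rw [hL]; positivity
  have hH : ∀ w, f w < fstar + G → ‖fderiv ℝ (gradient f) w‖ ≤ L := fun w hw =>
    (hsmooth w).trans (hL ▸ hbound _ (sub_nonneg.2 (hlb w)) (by linarith))
  have hrL : r ^ 2 * L ≤ G / 9 := hL ▸ sq_mul_le_div_nine hρ hK0 hKρ hΔ0 hr0
    (by rw [hr, hC1, hC2]; rfl) hΔG hKG
  have hg := sq_norm_gradient_le hf hlb hLpos hH (show f x < fstar + G by linarith)
  have hgr : ‖gradient f x‖ * r ≤ G / 3 := by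
    refine le_of_pow_le_pow_left₀ two_ne_zero (by positivity) ?_
    calc (‖gradient f x‖ * r) ^ 2 = ‖gradient f x‖ ^ 2 * r ^ 2 := mul_pow _ _ _
      _ ≤ 2 * Δ * (r ^ 2 * L) := by rw [← hΔ] at hg; nlinarith [sq_nonneg r]
      _ ≤ G * (G / 9) := by gcongr
      _ = (G / 3) ^ 2 := by ring
  have hball := closedBall_subset_setOf_lt hf hLpos.le hH (x := x) (r := r) (by linarith)
  have hHball : ∀ w ∈ closedBall x r, ‖fderiv ℝ (gradient f) w‖ ≤ L :=
    fun w hw => hH w (hball hw)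
  have hx1 : x1 ∈ closedBall x r := mem_closedBall_iff_norm.2 h1
  have hx2 : x2 ∈ closedBall x r := mem_closedBall_iff_norm.2 h2
  exact ⟨(convex_closedBall x r).norm_gradient_sub_le_of_norm_fderiv_gradient_le hf hHball
    hx2 hx1, (convex_closedBall x r).le_add_inner_add_of_norm_fderiv_gradient_le hf hHball hx1 hx2⟩

end
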